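/- Let α ∈ ℂ and n ≥ 1. For every x ∈ ℂ with (x − i/2)·(x + i/2) ≠ 0, ϑ_1(α,x)·(𝒮(𝒟ϑ_n(α,·)))(x) = n·(−(n−1)·(n−1+α)·ϑ_{n−1}(α,x) + ϑ_n(α,x)), where ϑ_1(α,x) = α² + x². -/
import Mathlib


open Complex Finset

/-- Wilson divided-difference operator. -/
noncomputable def Dw (f : ℂ → ℂ) (x : ℂ) : ℂ :=
  (f (x + I/2) - f (x - I/2)) / (2 * I * x)

/-- Averaging operator. -/
noncomputable def Sw (f : ℂ → ℂ) (x : ℂ) : ℂ :=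
  (f (x + I/2) + f (x - I/2)) / 2

/-- ϑ_n(α,x) = ∏_{j=0}^{n−1}((α + j)² + x²). -/
noncomputable def vartheta (α : ℂ) (n : ℕ) (x : ℂ) : ℂ :=
  ∏ j ∈ Finset.range n, ((α + j)^2 + x^2)

/-- Rising factorial. -/
noncomputable def pr (a : ℂ) (n : ℕ) : ℂ := ∏ j ∈ Finset.range n, (a + j)

lemma pr_succ (a : ℂ) (n : ℕ) : pr a (n+1) = pr a n * (a + n) :=
  Finset.prod_range_succ _ _

lemma pr_succ' (a : ℂ) (n : ℕ) : pr a (n+1) = a * pr (a+1) n := by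
  rw [pr, pr, Finset.prod_range_succ', mul_comm]
  congr 1
  · simp
  · refine Finset.prod_congr rfl fun j _ => ?_
    push_cast; ring

lemma vartheta_factor (α x : ℂ) (k : ℕ) :
    vartheta α k x = pr (α + I*x) k * pr (α - I*x) k := by
  rw [vartheta, pr, pr, ← Finset.prod_mul_distrib]
  refine Finset.prod_congr rfl fun j _ => ?_
  linear_combination (x^2) * Complex.I_sq

theorem stmt_8 (α : ℂ) (n : ℕ) (hn : 1 ≤ n) :
    ∀ x : ℂ, (x - I/2) * (x + I/2) ≠ 0 →
      (α^2 + x^2) * Sw (Dw (fun t => vartheta α n t)) x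
        = (n : ℂ) * (-((n : ℂ) - 1) * ((n : ℂ) - 1 + α) * vartheta α (n-1) x
            + vartheta α n x) := by
  obtain ⟨m, rfl⟩ : ∃ m, n = m + 1 := ⟨n - 1, (Nat.succ_pred_eq_of_pos hn).symm⟩
  intro x hx
  rw [mul_ne_zero_iff] at hx
  have hxm : x - I/2 ≠ 0 := hx.1
  have hxp : x + I/2 ≠ 0 := hx.2
  have hden1 : (2*I*(x + I/2)) ≠ 0 :=
    mul_ne_zero (mul_ne_zero two_ne_zero Complex.I_ne_zero) hxp
  have hden2 : (2*I*(x - I/2)) ≠ 0 :=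
    mul_ne_zero (mul_ne_zero two_ne_zero Complex.I_ne_zero) hxm
  simp only [Sw, Dw, Nat.add_sub_cancel]
  rw [show x + I/2 + I/2 = x + I from by ring, show x + I/2 - I/2 = x from by ring,
      show x - I/2 + I/2 = x from by ring, show x - I/2 - I/2 = x - I from by ring]
  simp only [vartheta_factor]
  rw [show α + I*(x+I) = (α + I*x) - 1 from by linear_combination Complex.I_sq,
      show α - I*(x+I) = (α - I*x) + 1 from by linear_combination -Complex.I_sq,
      show α + I*(x-I) = (α + I*x) + 1 from by linear_combination -Complex.I_sq,
      show α - I*(x-I) = (α - I*x) - 1 from by linear_combination Complex.I_sq]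
  have pA1 : pr (α + I*x - 1) (m+1) = (α + I*x - 1) * pr (α + I*x) m := by
    have h := pr_succ' (α + I*x - 1) m
    rwa [show α + I*x - 1 + 1 = α + I*x from by ring] at h
  have pC2 : pr (α - I*x - 1) (m+1) = (α - I*x - 1) * pr (α - I*x) m := by
    have h := pr_succ' (α - I*x - 1) m
    rwa [show α - I*x - 1 + 1 = α - I*x from by ring] at h
  rw [pA1, pC2, pr_succ (α + I*x) m, pr_succ (α - I*x) m,
      pr_succ (α + I*x + 1) m, pr_succ (α - I*x + 1) m]
  have hR1 : (α + I*x) * pr (α + I*x + 1) m = pr (α + I*x) m * (α + I*x + m) :=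
    (pr_succ' (α + I*x) m).symm.trans (pr_succ (α + I*x) m)
  have hR2 : (α - I*x) * pr (α - I*x + 1) m = pr (α - I*x) m * (α - I*x + m) :=
    (pr_succ' (α - I*x) m).symm.trans (pr_succ (α - I*x) m)
  rw [div_add_div _ _ hden1 hden2, div_div, ← mul_div_assoc,
      div_eq_iff (mul_ne_zero (mul_ne_zero hden1 hden2) two_ne_zero)]
  rw [show 2*I*(x + I/2) = (α + I*x) - (α - I*x) - 1 from by linear_combination Complex.I_sq,
      show 2*I*(x - I/2) = (α + I*x) - (α - I*x) + 1 from by linear_combination -Complex.I_sq,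
      show α^2 + x^2 = (α + I*x) * (α - I*x) from by linear_combination (x^2) * Complex.I_sq]
  push_cast
  linear_combination
    ((α + I*x)*((α + I*x) - 1)*((α - I*x) + 1 + (m:ℂ))*((α + I*x) - (α - I*x) + 1)
      * pr (α + I*x) m) * hR2
    - ((α - I*x)*((α + I*x) + 1 + (m:ℂ))*((α - I*x) - 1)*((α + I*x) - (α - I*x) - 1)
      * pr (α - I*x) m) * hR1
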